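/- Let d ≥ 2 and let x ∈ ℚ^{d-1} with ‖x‖₂ ≤ 1, with coordinates x_i = p_i/q_i (p_i ∈ ℤ, q_i ∈ ℕ positive), and let Q = lcm(q₁, …, q_{d-1}). Then there exist integers m and n₁, …, n_d with 1 ≤ m ≤ 2Q², |n_k| ≤ 2Q² for all k, such that σ_k(x) = n_k/m for all 1 ≤ k ≤ d (with a common denominator m for all coordinates). -/
import Mathlib


open Finset

/-- The inverse stereographic projection `σ : ℝ^(d-1) → ℝ^d` with pole `(0,…,0,1)`:
`σ(x) = (2x₁/(1+S²), …, 2x_{d-1}/(1+S²), (−1+S²)/(1+S²))` where `S² = ∑ⱼ xⱼ²`. -/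
noncomputable def sigma' {d : ℕ} (x : Fin (d - 1) → ℝ) : Fin d → ℝ := fun k =>
  if h : (k : ℕ) < d - 1 then
    2 * x ⟨k, h⟩ / (1 + ∑ j, x j ^ 2)
  else
    (-1 + ∑ j, x j ^ 2) / (1 + ∑ j, x j ^ 2)

/-- The stereographic projection `τ : ℝ^d → ℝ^(d-1)` from the pole `(0,…,0,1)`:
`τ(x) = (x₁/(1−x_d), …, x_{d-1}/(1−x_d))`. -/
noncomputable def tau' {d : ℕ} (x : Fin d → ℝ) : Fin (d - 1) → ℝ := fun i =>
  x ⟨(i : ℕ), by have := i.isLt; omega⟩ / (1 - x ⟨d - 1, by have := i.isLt; omega⟩)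

/-- The projection pole `p = (0,…,0,1) ∈ ℝ^d`. -/
def pole (d : ℕ) : Fin d → ℝ := fun k => if (k : ℕ) = d - 1 then 1 else 0

/-- The Euclidean norm `‖x‖₂` of a vector `x ∈ ℝ^n`. -/
noncomputable def norm2 {n : ℕ} (x : Fin n → ℝ) : ℝ := Real.sqrt (∑ i, x i ^ 2)
/-- Size of images under `σ`: if `x ∈ ℚ^(d-1)` lies in the closed unit ball, with
`x_i = p_i/q_i` and `Q = lcm(q₁, …, q_{d-1})`, then all coordinates of `σ(x)` can
be written as `n_k/m` with integers `1 ≤ m ≤ 2Q²` and `|n_k| ≤ 2Q²`. -/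
theorem sigma_denominator_size {d : ℕ} (hd : 2 ≤ d) (x : Fin (d - 1) → ℝ)
    (p : Fin (d - 1) → ℤ) (q : Fin (d - 1) → ℕ) (hq : ∀ i, 0 < q i)
    (hx : ∀ i, x i = (p i : ℝ) / (q i : ℝ)) (hball : norm2 x ≤ 1) :
    ∃ (m : ℤ) (n : Fin d → ℤ),
      1 ≤ m ∧ m ≤ 2 * ((Finset.univ.lcm q : ℕ) : ℤ) ^ 2 ∧
      (∀ k, |n k| ≤ 2 * ((Finset.univ.lcm q : ℕ) : ℤ) ^ 2) ∧
      (∀ k, sigma' x k = (n k : ℝ) / (m : ℝ)) := by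
  classical
  set Q : ℕ := Finset.univ.lcm q with hQdef
  have hdvd : ∀ i, q i ∣ Q := fun i => Finset.dvd_lcm (Finset.mem_univ i)
  have hQpos : 0 < Q := Nat.pos_of_ne_zero (by
    intro h0
    rw [hQdef, Finset.lcm_eq_zero_iff] at h0
    obtain ⟨i, -, hi⟩ := h0
    exact (hq i).ne' hi)
  have hQne : (Q : ℝ) ≠ 0 := by positivity
  set a : Fin (d - 1) → ℤ := fun i => p i * ((Q / q i : ℕ) : ℤ) with ha
  have hxa : ∀ i, x i * (Q : ℝ) = (a i : ℝ) := by
    intro i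
    have hq' : (q i : ℝ) ≠ 0 := Nat.cast_ne_zero.mpr (hq i).ne'
    have hQq : ((q i : ℕ) : ℝ) * ((Q / q i : ℕ) : ℝ) = (Q : ℝ) := by
      rw [← Nat.cast_mul, Nat.mul_div_cancel' (hdvd i)]
    have haR : (a i : ℝ) = (p i : ℝ) * ((Q / q i : ℕ) : ℝ) := by
      rw [ha, Int.cast_mul, Int.cast_natCast]
    rw [hx i, haR, ← hQq]
    field_simp
  have hSnn : (0:ℝ) ≤ ∑ j, x j ^ 2 := Finset.sum_nonneg fun j _ => sq_nonneg _
  have hSle : (∑ j, x j ^ 2) ≤ 1 := by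
    have h1 : Real.sqrt (∑ j, x j ^ 2) ≤ 1 := hball
    nlinarith [Real.sq_sqrt hSnn, Real.sqrt_nonneg (∑ j, x j ^ 2)]
  have hS : (∑ j, x j ^ 2) * (Q : ℝ) ^ 2 = ∑ i, (a i : ℝ) ^ 2 := by
    rw [Finset.sum_mul]
    refine Finset.sum_congr rfl fun i _ => ?_
    rw [← hxa i]; ring
  set m : ℤ := (Q : ℤ) ^ 2 + ∑ i, a i ^ 2 with hm
  have hsumnn : (0:ℤ) ≤ ∑ i, a i ^ 2 := Finset.sum_nonneg fun i _ => sq_nonneg _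
  have hQ1 : (1:ℤ) ≤ (Q:ℤ) := by exact_mod_cast hQpos
  have hsumle : (∑ i, a i ^ 2) ≤ (Q:ℤ) ^ 2 := by
    have : ((∑ i, a i ^ 2 : ℤ) : ℝ) ≤ (((Q:ℤ) ^ 2 : ℤ) : ℝ) := by
      push_cast
      rw [← hS]
      nlinarith [sq_nonneg ((Q:ℝ))]
    exact_mod_cast this
  have hm1 : 1 ≤ m := by nlinarith
  have hm2 : m ≤ 2 * (Q:ℤ) ^ 2 := by omega
  have hmR : ((1:ℝ) + ∑ j, x j ^ 2) * (Q:ℝ) ^ 2 = (m : ℝ) := by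
    rw [hm]; push_cast; rw [← hS]; ring
  have hdenpos : (0:ℝ) < 1 + ∑ j, x j ^ 2 := by linarith
  have hmne : ((m:ℝ)) ≠ 0 := by
    have : (0:ℝ) < (m:ℝ) := by exact_mod_cast hm1
    linarith
  have hxle : ∀ i, |x i| ≤ 1 := by
    intro i
    have : x i ^ 2 ≤ ∑ j, x j ^ 2 :=
      Finset.single_le_sum (fun j _ => sq_nonneg (x j)) (Finset.mem_univ i)
    have h2 : x i ^ 2 ≤ 1 := le_trans this hSle
    rw [abs_le]; constructor <;> nlinarith
  have haQ : ∀ i, |a i| ≤ (Q:ℤ) := by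
    intro i
    have : (|a i| : ℝ) ≤ (Q : ℝ) := by
      rw [← hxa i, abs_mul, abs_of_nonneg (by positivity : (0:ℝ) ≤ (Q:ℝ))]
      nlinarith [hxle i, abs_nonneg (x i), (by positivity : (0:ℝ) ≤ (Q:ℝ))]
    exact_mod_cast this
  refine ⟨m, fun k => if h : (k : ℕ) < d - 1 then 2 * a ⟨k, h⟩ * (Q:ℤ)
    else (∑ i, a i ^ 2) - (Q:ℤ) ^ 2, hm1, hm2, ?_, ?_⟩
  · intro k
    by_cases h : (k : ℕ) < d - 1
    · simp only [dif_pos h]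
      have := haQ ⟨k, h⟩
      have habs : |2 * a ⟨k, h⟩ * (Q:ℤ)| = 2 * |a ⟨k, h⟩| * (Q:ℤ) := by
        rw [abs_mul, abs_mul, abs_of_nonneg (by norm_num : (0:ℤ) ≤ 2),
          abs_of_nonneg (by omega : (0:ℤ) ≤ (Q:ℤ))]
      rw [habs]
      nlinarith [abs_nonneg (a ⟨k, h⟩)]
    · simp only [dif_neg h]
      rw [abs_le]
      constructor <;> nlinarith
  · intro k
    by_cases h : (k : ℕ) < d - 1
    · simp only [sigma']
      simp only [dif_pos h]
      rw [div_eq_div_iff (ne_of_gt hdenpos) hmne]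
      push_cast
      rw [← hmR, ← hxa ⟨k, h⟩]
      ring
    · simp only [sigma']
      simp only [dif_neg h]
      rw [div_eq_div_iff (ne_of_gt hdenpos) hmne]
      push_cast
      rw [← hS, ← hmR]
      ring
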